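/- Let p ≤ q be integers that are both odd. Then the block matrix M_{ρ(p,q)} of the string representation ρ(p,q) is surjective and its kernel has dimension 1 over κ. -/

import Mathlib

open Module

/-- A representation of the cyclic quiver `G_{2m}`: `W i` is the odd vertex space `V_{2i+1}`
(0-based, so `W 0 = V_1`), `U i` is the even vertex space `V_{2i+2}`,
`α i : V_{2i+1} → V_{2i+2}` and `β i : V_{2i+3} → V_{2i+2}` (indices of vertices mod `2m`). -/
structure QRep (κ : Type) [Field κ] (m : ℕ) [NeZero m] where
  W : Fin m → Type
  U : Fin m → Type
  [accW : ∀ i, AddCommGroup (W i)]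
  [accU : ∀ i, AddCommGroup (U i)]
  [modW : ∀ i, Module κ (W i)]
  [modU : ∀ i, Module κ (U i)]
  [fdW : ∀ i, FiniteDimensional κ (W i)]
  [fdU : ∀ i, FiniteDimensional κ (U i)]
  α : ∀ i, W i →ₗ[κ] U i
  β : ∀ i, W (i + 1) →ₗ[κ] U i

attribute [instance] QRep.accW QRep.accU QRep.modW QRep.modU QRep.fdW QRep.fdU

namespace QRep

variable {κ : Type} [Field κ] {m : ℕ} [NeZero m]

/-- The block matrix `M_ρ : ⊕ V_{2i-1} → ⊕ V_{2i}`,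
`M_ρ(v₁, v₃, …) = (α₁v₁ − β₁v₃, α₂v₃ − β₂v₅, …, α_m v_{2m−1} − β_m v₁)`. -/
def blockMap (ρ : QRep κ m) : (∀ i, ρ.W i) →ₗ[κ] ∀ i, ρ.U i :=
  LinearMap.pi fun i => (ρ.α i).comp (LinearMap.proj i) - (ρ.β i).comp (LinearMap.proj (i + 1))

/-- Direct sum of two representations. -/
def dsum (ρ σ : QRep κ m) : QRep κ m where
  W i := ρ.W i × σ.W i
  U i := ρ.U i × σ.U i
  α i := (ρ.α i).prodMap (σ.α i)
  β i := (ρ.β i).prodMap (σ.β i)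

/-- Direct sum of a finite family of representations. -/
def dsumFin {N : ℕ} (f : Fin N → QRep κ m) : QRep κ m where
  W i := ∀ j, (f j).W i
  U i := ∀ j, (f j).U i
  α i := LinearMap.pi fun j => ((f j).α i).comp (LinearMap.proj j)
  β i := LinearMap.pi fun j => ((f j).β i).comp (LinearMap.proj j)

/-- An isomorphism of representations. -/
structure Iso (ρ σ : QRep κ m) where
  φW : ∀ i, ρ.W i ≃ₗ[κ] σ.W i
  φU : ∀ i, ρ.U i ≃ₗ[κ] σ.U i
  commα : ∀ i x, φU i (ρ.α i x) = σ.α i (φW i x)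
  commβ : ∀ i x, φU i (ρ.β i x) = σ.β i (φW (i + 1) x)

def IsIsomorphic (ρ σ : QRep κ m) : Prop := Nonempty (Iso ρ σ)

/-- A representation is nontrivial if some vertex space is nonzero. -/
def NontrivialRep (ρ : QRep κ m) : Prop :=
  (∃ i, Nontrivial (ρ.W i)) ∨ (∃ i, Nontrivial (ρ.U i))

/-- A representation is indecomposable if it is nontrivial and not isomorphic to a direct
sum of two nontrivial representations. -/
def Indecomposable (ρ : QRep κ m) : Prop :=
  ρ.NontrivialRep ∧ ∀ σ τ : QRep κ m, σ.NontrivialRep → τ.NontrivialRep →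
    ¬ ρ.IsIsomorphic (σ.dsum τ)

end QRep

namespace QRep

open Fin.NatCast Fin.CommRing

variable {κ : Type} [Field κ] {m : ℕ} [NeZero m]

/-- Transport of an odd vertex space along an equality of indices (linear map version). -/
def castW (ρ : QRep κ m) {a b : Fin m} (h : a = b) : ρ.W a →ₗ[κ] ρ.W b := by
  subst h; exact LinearMap.id

/-- Transport of an odd vertex space along an equality of indices (equiv version). -/
def castWE (ρ : QRep κ m) {a b : Fin m} (h : a = b) : ρ.W a ≃ₗ[κ] ρ.W b := by
  subst h; exact LinearEquiv.refl κ _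

/-- Iterated composite of the maps `g i : W i → W (i+1)`, `n` steps starting at vertex `i`. -/
def cyclicComp (ρ : QRep κ m) (g : ∀ i, ρ.W i →ₗ[κ] ρ.W (i + 1)) :
    (n : ℕ) → ∀ i : Fin m, ρ.W i →ₗ[κ] ρ.W (i + (n : Fin m))
  | 0, i => ρ.castW (by simp)
  | n + 1, i =>
      (ρ.castW (show i + (n : Fin m) + 1 = i + ((n + 1 : ℕ) : Fin m) by push_cast; ring)).comp
        ((g (i + (n : Fin m))).comp (cyclicComp ρ g n i))

/-- The monodromy `T = β_m⁻¹ ∘ α_m ∘ ⋯ ∘ β_1⁻¹ ∘ α_1 : V_1 → V_1`, where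
`g i = β i⁻¹ ∘ α i` is given as data. -/
def monodromy (ρ : QRep κ m) (g : ∀ i, ρ.W i →ₗ[κ] ρ.W (i + 1)) : ρ.W 0 →ₗ[κ] ρ.W 0 :=
  (ρ.castW (show (0 : Fin m) + (m : Fin m) = 0 by simp [Fin.natCast_self])).comp
    (cyclicComp ρ g m 0)

/-- Iterated composite of the equivalences `e i : W i ≃ W (i+1)`, `n` steps starting at `i`. -/
def cyclicCompE (ρ : QRep κ m) (e : ∀ i, ρ.W i ≃ₗ[κ] ρ.W (i + 1)) :
    (n : ℕ) → ∀ i : Fin m, ρ.W i ≃ₗ[κ] ρ.W (i + (n : Fin m))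
  | 0, i => ρ.castWE (by simp)
  | n + 1, i =>
      ((cyclicCompE ρ e n i).trans (e (i + (n : Fin m)))).trans
        (ρ.castWE (show i + (n : Fin m) + 1 = i + ((n + 1 : ℕ) : Fin m) by push_cast; ring))

/-- `T_i`, the monodromy based at the odd vertex `V_{2i+1}` (so `Ti e 0` is `T_m = T`). -/
def Ti (ρ : QRep κ m) (e : ∀ i, ρ.W i ≃ₗ[κ] ρ.W (i + 1)) (i : Fin m) : ρ.W i ≃ₗ[κ] ρ.W i :=
  (cyclicCompE ρ e m i).trans (ρ.castWE (show i + (m : Fin m) = i by simp [Fin.natCast_self]))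

/-- `C_i = g_i ∘ ⋯ ∘ g_1 : V_1 → V_{2i+1}`. -/
def Ci (ρ : QRep κ m) (e : ∀ i, ρ.W i ≃ₗ[κ] ρ.W (i + 1)) (i : Fin m) : ρ.W 0 ≃ₗ[κ] ρ.W i :=
  (cyclicCompE ρ e (i : ℕ) 0).trans
    (ρ.castWE (show (0 : Fin m) + ((i : ℕ) : Fin m) = i by simp [Fin.cast_val_eq_self]))

end QRep

/-- Index set of the basis vectors `e_l`, `p ≤ l ≤ q`, `l ≡ j (mod 2m)`,
of a vertex space of the string representation `ρ(p,q)`. -/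
noncomputable def strIdx (m : ℕ) (p q : ℤ) (j : ZMod (2 * m)) : Finset ℤ :=
  (Finset.Icc p q).filter fun l => ((l : ZMod (2 * m)) = j)

/-- The linear map sending the basis vector `e_l` (`l ∈ T`) to the coordinate `l + d` (if present):
in matrix terms, the map whose `(l', l)` entry is `1` iff `l' + d = l`. -/
def eMap (κ : Type) [Field κ] (S T : Finset ℤ) (d : ℤ) : (S → κ) →ₗ[κ] T → κ where
  toFun f l := if h : ((l : ℤ) + d) ∈ S then f ⟨(l : ℤ) + d, h⟩ else 0
  map_add' f g := by
    funext l
    by_cases h : ((l : ℤ) + d) ∈ S <;> simp [h]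
  map_smul' c f := by
    funext l
    by_cases h : ((l : ℤ) + d) ∈ S <;> simp [h]

/-- The string representation `ρ(p,q)`: the vertex space at vertex `j` has basis
`{e_l : p ≤ l ≤ q, l ≡ j (mod 2m)}`, `α` sends `e_l` to `e_{l+1}` if `l+1 ≤ q` (else `0`),
and `β` sends `e_l` to `e_{l−1}` if `l−1 ≥ p` (else `0`). -/
noncomputable def strRep (κ : Type) [Field κ] (m : ℕ) [NeZero m] (p q : ℤ) : QRep κ m where
  W i := strIdx m p q ((2 * (i : ℕ) + 1 : ℕ)) → κ
  U i := strIdx m p q ((2 * (i : ℕ) + 2 : ℕ)) → κ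
  α _ := eMap κ _ _ (-1)
  β _ := eMap κ _ _ 1

/-- The `k × k` Jordan block `J(λ,k)`: `λ` on the diagonal, `1` on the superdiagonal. -/
def jordanMatrix (κ : Type) [Field κ] (lam : κ) (k : ℕ) : Matrix (Fin k) (Fin k) κ :=
  Matrix.of fun a b => if b = a then lam else if (b : ℕ) = (a : ℕ) + 1 then (1 : κ) else 0

/-- The Jordan-cell representation `ρ^J(λ,k)`: every vertex space is `κ^k`, `α_1 = J(λ,k)`,
and all other maps are the identity. -/
def jordanRep (κ : Type) [Field κ] (m : ℕ) [NeZero m] (lam : κ) (k : ℕ) : QRep κ m where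
  W _ := Fin k → κ
  U _ := Fin k → κ
  α i := if i = 0 then (jordanMatrix κ lam k).mulVecLin else LinearMap.id
  β _ := LinearMap.id

/-!
Gluing the odd vertex spaces of `ρ(p,q)` along their bases `e_l` identifies `⊕ V_{2i-1}` with the
functions on the odd integers of `[p, q]`, and likewise `⊕ V_{2i}` with the functions on the even
ones. Since `p` and `q` are odd, both neighbours `l ± 1` of an even `l ∈ [p, q]` lie in `[p, q]`,
so `M_{ρ(p,q)}` becomes the difference operator `f ↦ (l ↦ f (l - 1) - f (l + 1))`. Its kernel
consists of the functions constant on the odd integers of `[p, q]`, and a preimage of `g` is given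
by the tail sums `k ↦ ∑_{x > k} g x`.
-/

open Finset Function

section Glue

variable {ι α M : Type*} [Fintype ι] [DecidableEq α] [AddCommMonoid M] {S : ι → Finset α}

def glue (v : ∀ i, S i → M) (a : α) : M :=
  ∑ i, if h : a ∈ S i then v i ⟨a, h⟩ else 0

theorem glue_eq_of_mem (hS : Pairwise (Disjoint on S)) (v : ∀ i, S i → M) {i : ι} {a : α}
    (ha : a ∈ S i) : glue v a = v i ⟨a, ha⟩ := by
  rw [glue, Fintype.sum_eq_single i fun j hji => dif_neg fun haj =>
    disjoint_left.mp (hS hji) haj ha, dif_pos ha]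

theorem glue_eq_zero_of_forall_notMem (v : ∀ i, S i → M) {a : α} (ha : ∀ i, a ∉ S i) :
    glue v a = 0 :=
  sum_eq_zero fun i _ => dif_neg (ha i)

end Glue

theorem Int.eq_of_odd_of_forall_even_sub_one_eq_add_one {α : Type*} {f : ℤ → α} {p q : ℤ}
    (hp : Odd p) (hf : ∀ l, Even l → p < l → l < q → f (l - 1) = f (l + 1))
    {k : ℤ} (hk : Odd k) (hpk : p ≤ k) (hkq : k ≤ q) : f k = f p := by
  obtain ⟨a, rfl⟩ := hp
  obtain ⟨b, rfl⟩ := hk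
  obtain ⟨n, rfl⟩ : ∃ n : ℕ, b = a + n := ⟨(b - a).toNat, by omega⟩
  induction n with
  | zero => simp
  | succ n ih =>
    push_cast at hpk hkq ih ⊢
    rw [← ih (by omega) (by omega)]
    convert (hf (2 * (a + n) + 2) ⟨a + n + 1, by ring⟩ (by omega) (by omega)).symm using 2 <;> ring

theorem Finset.sum_Icc_ite_lt_sub {R : Type*} [AddCommGroup R] (G : ℤ → R) {p q l : ℤ}
    (hpl : p ≤ l) (hlq : l + 1 ≤ q) :
    (∑ x ∈ Icc p q, if l - 1 < x then G x else 0) - (∑ x ∈ Icc p q, if l + 1 < x then G x else 0)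
      = G l + G (l + 1) := by
  have hl : l ∈ Icc p q := mem_Icc.mpr ⟨hpl, by omega⟩
  have hl' : l + 1 ∈ Icc p q := mem_Icc.mpr ⟨by omega, hlq⟩
  have hx : ∀ x, ((if l - 1 < x then G x else 0) - if l + 1 < x then G x else 0) =
      (if l = x then G x else 0) + (if l + 1 = x then G x else 0) := by
    intro x
    split_ifs <;> first | omega | simp_all
  rw [← sum_sub_distrib, sum_congr rfl fun x _ => hx x, sum_add_distrib, sum_ite_eq, sum_ite_eq,
    if_pos hl, if_pos hl']

section ZModIndex

variable {m : ℕ}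

theorem natCast_two_mul_add_injective (c : ℕ) :
    Function.Injective fun i : Fin m => ((2 * i + c : ℕ) : ZMod (2 * m)) := by
  intro i i' h
  have h2m := (ZMod.natCast_eq_natCast_iff _ _ _).mp h
  have hm : (i : ℕ) ≡ i' [MOD m] := Nat.ModEq.mul_left_cancel' two_ne_zero (h2m.add_right_cancel' c)
  exact Fin.ext (hm.eq_of_lt_of_lt i.isLt i'.isLt)

theorem exists_natCast_two_mul_add_eq [NeZero m] (c : ℕ) {l : ℤ} (h : 2 ∣ l - c) :
    ∃ i : Fin m, ((2 * i + c : ℕ) : ZMod (2 * m)) = l := by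
  obtain ⟨t, ht⟩ := h
  have hm : (0 : ℤ) < m := by exact_mod_cast Nat.pos_of_ne_zero (NeZero.ne m)
  have h0 : 0 ≤ t % m := Int.emod_nonneg t hm.ne'
  refine ⟨⟨(t % m).toNat, by have := Int.emod_lt_of_pos t hm; omega⟩, ?_⟩
  have hi : ((t % m).toNat : ℤ) = t - m * (t / m) := by rw [Int.toNat_of_nonneg h0, Int.emod_def]
  have hdvd : ((2 * m : ℕ) : ℤ) ∣ l - ((2 * (t % m).toNat + c : ℕ) : ℤ) :=
    ⟨t / m, by push_cast [hi]; linarith⟩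
  have := (ZMod.intCast_eq_intCast_iff_dvd_sub _ _ _).mpr hdvd
  push_cast at this ⊢
  exact this

theorem two_dvd_sub_of_intCast_eq_natCast {l : ℤ} {b : ℕ} (h : (l : ZMod (2 * m)) = b) :
    2 ∣ (b : ℤ) - l := by
  have : ((2 * m : ℕ) : ℤ) ∣ (b : ℤ) - l :=
    (ZMod.intCast_eq_intCast_iff_dvd_sub _ _ _).mp (by simpa using h)
  exact (Dvd.intro _ (by push_cast; rfl)).trans this

theorem natCast_two_mul_val_add_one [NeZero m] (i : Fin m) :
    ((2 * ((i + 1 : Fin m) : ℕ) : ℕ) : ZMod (2 * m)) = ((2 * (i + 1) : ℕ) : ZMod (2 * m)) := by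
  rw [Fin.val_add, Fin.val_one', Nat.add_mod_mod]
  exact (ZMod.natCast_eq_natCast_iff _ _ _).mpr (Nat.ModEq.mul_left' 2 (Nat.mod_modEq _ _))

end ZModIndex

section StringRep

variable {κ : Type} [Field κ] {m : ℕ} {p q l : ℤ}

theorem mem_strIdx {j : ZMod (2 * m)} :
    l ∈ strIdx m p q j ↔ (p ≤ l ∧ l ≤ q) ∧ (l : ZMod (2 * m)) = j := by
  rw [strIdx, mem_filter, mem_Icc]

theorem pairwise_disjoint_strIdx (c : ℕ) :
    Pairwise (Disjoint on fun i : Fin m => strIdx m p q ((2 * i + c : ℕ))) :=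
  fun _ _ hij => disjoint_left.mpr fun _ h h' =>
    (natCast_two_mul_add_injective c).ne hij ((mem_strIdx.mp h).2.symm.trans (mem_strIdx.mp h').2)

theorem two_dvd_sub_of_mem_strIdx {b : ℕ} (hl : l ∈ strIdx m p q b) : 2 ∣ (b : ℤ) - l :=
  two_dvd_sub_of_intCast_eq_natCast (mem_strIdx.mp hl).2

theorem exists_mem_strIdx [NeZero m] (c : ℕ) (h : 2 ∣ l - c) (hpl : p ≤ l) (hlq : l ≤ q) :
    ∃ i : Fin m, l ∈ strIdx m p q ((2 * i + c : ℕ)) := by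
  obtain ⟨i, hi⟩ := exists_natCast_two_mul_add_eq (m := m) c h
  exact ⟨i, mem_strIdx.mpr ⟨⟨hpl, hlq⟩, hi.symm⟩⟩

theorem sub_one_mem_strIdx (hp : Odd p) {i : Fin m} (hl : l ∈ strIdx m p q ((2 * i + 2 : ℕ))) :
    l - 1 ∈ strIdx m p q ((2 * i + 1 : ℕ)) := by
  obtain ⟨⟨hpl, hlq⟩, hlj⟩ := mem_strIdx.mp hl
  have := two_dvd_sub_of_mem_strIdx hl
  obtain ⟨a, rfl⟩ := hp
  refine mem_strIdx.mpr ⟨⟨by omega, by omega⟩, ?_⟩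
  push_cast at hlj ⊢
  rw [hlj]; ring

theorem add_one_mem_strIdx [NeZero m] (hq : Odd q) {i : Fin m}
    (hl : l ∈ strIdx m p q ((2 * i + 2 : ℕ))) :
    l + 1 ∈ strIdx m p q ((2 * (i + 1 : Fin m) + 1 : ℕ)) := by
  obtain ⟨⟨hpl, hlq⟩, hlj⟩ := mem_strIdx.mp hl
  have := two_dvd_sub_of_mem_strIdx hl
  obtain ⟨a, rfl⟩ := hq
  refine mem_strIdx.mpr ⟨⟨by omega, by omega⟩, ?_⟩
  rw [Nat.cast_add, natCast_two_mul_val_add_one]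
  push_cast at hlj ⊢
  rw [hlj]; ring

variable [NeZero m]

theorem strRep_blockMap_apply (hp : Odd p) (hq : Odd q) (v : ∀ i, (strRep κ m p q).W i)
    (i : Fin m) (l : strIdx m p q ((2 * i + 2 : ℕ))) :
    (strRep κ m p q).blockMap v i l =
      v i ⟨l - 1, sub_one_mem_strIdx hp l.2⟩ - v (i + 1) ⟨l + 1, add_one_mem_strIdx hq l.2⟩ :=
  congrArg₂ (fun a b : κ => a - b) (dif_pos (sub_one_mem_strIdx hp l.2))
    (dif_pos (add_one_mem_strIdx hq l.2))

variable (κ m p q) in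
def strRepOnes : ∀ i, (strRep κ m p q).W i := fun _ _ => 1

theorem strRep_ker_blockMap (hp : Odd p) (hq : Odd q) :
    LinearMap.ker (strRep κ m p q).blockMap = κ ∙ strRepOnes κ m p q := by
  refine le_antisymm (fun v hv => ?_) ((Submodule.span_singleton_le_iff_mem _ _).mpr ?_)
  · have hstep : ∀ l, Even l → p < l → l < q → glue v (l - 1) = glue v (l + 1) := by
      intro l hl hpl hlq
      obtain ⟨i, hi⟩ := exists_mem_strIdx (m := m) 2 (by obtain ⟨a, rfl⟩ := hl; omega) hpl.le hlq.le
      have hvi := congrFun (congrFun hv i) ⟨l, hi⟩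
      rw [strRep_blockMap_apply hp hq] at hvi
      rw [glue_eq_of_mem (pairwise_disjoint_strIdx 1) v (sub_one_mem_strIdx hp hi),
        glue_eq_of_mem (pairwise_disjoint_strIdx 1) v (add_one_mem_strIdx hq hi)]
      exact sub_eq_zero.mp hvi
    rw [Submodule.mem_span_singleton]
    refine ⟨glue v p, funext fun i => funext fun l => ?_⟩
    obtain ⟨⟨hpl, hlq⟩, -⟩ := mem_strIdx.mp l.2
    have hl : Odd (l : ℤ) := Int.odd_iff.mpr (by have := two_dvd_sub_of_mem_strIdx l.2; omega)
    calc glue v p • (1 : κ) = glue v l := by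
          rw [smul_eq_mul, mul_one,
            Int.eq_of_odd_of_forall_even_sub_one_eq_add_one hp hstep hl hpl hlq]
      _ = v i l := glue_eq_of_mem (pairwise_disjoint_strIdx 1) v l.2
  · exact funext fun i => funext fun l => (strRep_blockMap_apply hp hq _ i l).trans (sub_self 1)

theorem strRep_blockMap_surjective (hp : Odd p) (hq : Odd q) :
    Function.Surjective (strRep κ m p q).blockMap := by
  intro g
  have hG : ∀ l : ℤ, Even l → glue g (l + 1) = 0 := fun l hl =>
    glue_eq_zero_of_forall_notMem g fun i hi => by
      have := two_dvd_sub_of_mem_strIdx hi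
      obtain ⟨a, rfl⟩ := hl
      omega
  refine ⟨fun _ l => ∑ x ∈ Icc p q, if (l : ℤ) < x then glue g x else 0,
    funext fun i => funext fun l => ?_⟩
  obtain ⟨⟨hpl, hlq⟩, -⟩ := mem_strIdx.mp l.2
  have hl : Even (l : ℤ) := Int.even_iff.mpr (by have := two_dvd_sub_of_mem_strIdx l.2; omega)
  refine (strRep_blockMap_apply hp hq _ i l).trans ?_
  calc _ = glue g l + glue g (l + 1) :=
        sum_Icc_ite_lt_sub _ hpl (by obtain ⟨a, rfl⟩ := hq; obtain ⟨b, hb⟩ := hl; omega)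
    _ = g i l := by rw [hG l hl, add_zero, glue_eq_of_mem (pairwise_disjoint_strIdx 2) g l.2]

end StringRep

/-- For `p ≤ q` both odd, the block matrix of the string representation
`ρ(p,q)` is surjective and its kernel is one-dimensional. -/
theorem strRep_blockMap_odd_odd {κ : Type} [Field κ] {m : ℕ} [NeZero m]
    (p q : ℤ) (hpq : p ≤ q) (hp : Odd p) (hq : Odd q) :
    Function.Surjective (strRep κ m p q).blockMap ∧
    finrank κ (LinearMap.ker (strRep κ m p q).blockMap) = 1 := by
  refine ⟨strRep_blockMap_surjective hp hq, ?_⟩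
  rw [strRep_ker_blockMap hp hq]
  refine finrank_span_singleton fun h => ?_
  obtain ⟨i, hi⟩ := exists_mem_strIdx (m := m) 1 (by obtain ⟨a, rfl⟩ := hp; omega) le_rfl hpq
  exact one_ne_zero (congrFun (congrFun h i) ⟨p, hi⟩)
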